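/- The hypergraph on vertex set [n]^(2) whose hyperedges are all triangles T(a,b,c) with max{a,b} < c and b ≡ a+1 (mod c-1) is acyclic and has exactly two components: one consisting of the three vertices of T(3,2,1), and one containing all other vertices (for n ≥ 3). -/

import Mathlib

/-!
Rank a vertex `(x, y)` by `2(x + y)` and a hyperedge by `2m + 1`, where `m` is the least
coordinate sum of its vertices. Solving the congruence shows that the hyperedges are the
triangles `T(a, a+1, c)` and `T(c-1, 1, c)`. In each of them the vertex of least sum is unique,
and every vertex other than `(1,2)` and `(2,1)` is a non-minimal vertex of exactly one hyperedge.
So in the incidence graph every node has at most one neighbour of lower rank, which rules out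
cycles (look at a node of top rank on a cycle), and descending in rank joins every node to
`(1,2)` or `(2,1)`. Finally `T(2,1,3) = T(3,2,1)` meets no other hyperedge.
-/

/-- `PairsSet n` is `[n]^(2)`, the set of ordered pairs of distinct elements of `{1,…,n}`. -/
def PairsSet (n : ℕ) : Set (ℕ × ℕ) :=
  {p | p.1 ≠ p.2 ∧ 1 ≤ p.1 ∧ p.1 ≤ n ∧ 1 ≤ p.2 ∧ p.2 ≤ n}

/-- The triangle `T(a,b,c) = {(a,b),(b,c),(c,a)}`. -/
def Tset (a b c : ℕ) : Set (ℕ × ℕ) := {(a, b), (b, c), (c, a)}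

/-- `h` is a triangle `T(a,b,c)` for some triple of distinct elements of `{1,…,n}`. -/
def IsTriangle (n : ℕ) (h : Set (ℕ × ℕ)) : Prop :=
  ∃ a b c : ℕ, a ≠ b ∧ b ≠ c ∧ a ≠ c ∧ 1 ≤ a ∧ a ≤ n ∧ 1 ≤ b ∧ b ≤ n ∧ 1 ≤ c ∧ c ≤ n ∧
    h = Tset a b c

/-- The bipartite incidence graph of a hypergraph with vertex set `V` and hyperedge set `H`:
vertices on one side, hyperedges on the other, adjacency given by membership. -/
def incGraph (V : Set (ℕ × ℕ)) (H : Set (Set (ℕ × ℕ))) : SimpleGraph (↥V ⊕ ↥H) where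
  Adj x y :=
    (∃ v h, x = Sum.inl v ∧ y = Sum.inr h ∧ (v : ℕ × ℕ) ∈ (h : Set (ℕ × ℕ))) ∨
    (∃ v h, y = Sum.inl v ∧ x = Sum.inr h ∧ (v : ℕ × ℕ) ∈ (h : Set (ℕ × ℕ)))
  symm := by
    constructor
    rintro x y (⟨v, h, rfl, rfl, hm⟩ | ⟨v, h, rfl, rfl, hm⟩)
    · exact Or.inr ⟨v, h, rfl, rfl, hm⟩
    · exact Or.inl ⟨v, h, rfl, rfl, hm⟩
  loopless := by constructor; rintro x (⟨v, h, rfl, hy, -⟩ | ⟨v, h, hy, rfl, -⟩) <;> simp at hy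

/-- The hypergraph `(V, H)` is acyclic and has exactly two connected components, one whose
set of (pair-)vertices is exactly the three vertices of `T(3,2,1)` and one containing all
other vertices. -/
def TwoComponents321 (V : Set (ℕ × ℕ)) (H : Set (Set (ℕ × ℕ))) : Prop :=
  ∃ c₁ c₂ : (incGraph V H).ConnectedComponent, c₁ ≠ c₂ ∧
    (∀ x, (incGraph V H).connectedComponentMk x = c₁ ∨
          (incGraph V H).connectedComponentMk x = c₂) ∧
    (∀ v : ↥V, (incGraph V H).connectedComponentMk (Sum.inl v) = c₁ ↔
      (v : ℕ × ℕ) ∈ Tset 3 2 1)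

open SimpleGraph

namespace SimpleGraph

variable {α : Type*} {G : SimpleGraph α}

/-- A node of maximal rank on a cycle has two distinct neighbours on it, both of lower rank. -/
theorem isAcyclic_of_rank (ρ : α → ℕ) (hne : ∀ x y, G.Adj x y → ρ x ≠ ρ y)
    (huniq : ∀ x y z, G.Adj x y → G.Adj x z → ρ y < ρ x → ρ z < ρ x → y = z) :
    G.IsAcyclic := by
  classical
  intro v c hc
  obtain ⟨u, hu, hmax⟩ := Set.exists_max_image {x | x ∈ c.support} ρ (List.finite_toSet _)
    ⟨v, c.start_mem_support⟩
  set c' := c.rotate u hu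
  have hc' : c'.IsCycle := hc.rotate hu
  have hlt : ∀ {w}, G.Adj u w → w ∈ c'.support → ρ w < ρ u := fun hw hmem =>
    lt_of_le_of_ne (hmax _ ((c.mem_support_rotate_iff u hu).mp hmem)) (hne _ _ hw).symm
  have hsnd : G.Adj u c'.snd := c'.adj_snd hc'.not_nil
  have hpen : G.Adj u c'.penultimate := (c'.adj_penultimate hc'.not_nil).symm
  exact hc'.snd_ne_penultimate <| huniq u _ _ hsnd hpen
    (hlt hsnd (c'.getVert_mem_support _)) (hlt hpen (c'.getVert_mem_support _))

theorem reachable_of_exists_adj_rank_lt (ρ : α → ℕ) {P : α → Prop} {r : α}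
    (hdesc : ∀ x, P x → x ≠ r → ∃ y, G.Adj x y ∧ P y ∧ ρ y < ρ x) :
    ∀ x, P x → G.Reachable x r := by
  intro x
  induction hx : ρ x using Nat.strong_induction_on generalizing x with
  | _ N ih =>
    intro hPx
    by_cases hxr : x = r
    · exact hxr ▸ Reachable.refl x
    obtain ⟨y, hxy, hPy, hy⟩ := hdesc x hPx hxr
    exact hxy.reachable.trans (ih _ (hx ▸ hy) y rfl hPy)

theorem Reachable.mem_of_adj_closed {S : Set α} (hS : ∀ x y, G.Adj x y → x ∈ S → y ∈ S)
    {x y : α} (hxy : G.Reachable x y) (hx : x ∈ S) : y ∈ S := by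
  obtain ⟨p⟩ := hxy
  induction p with
  | nil => exact hx
  | cons hadj _ ih => exact ih (hS _ _ hadj hx)

theorem connectedComponentMk_eq_iff_of_adj_closed {S : Set α}
    (hS : ∀ x y, G.Adj x y → x ∈ S → y ∈ S) {s : α} (hs : s ∈ S)
    (hreach : ∀ x ∈ S, G.Reachable x s) (x : α) :
    G.connectedComponentMk x = G.connectedComponentMk s ↔ x ∈ S :=
  ⟨fun h => (ConnectedComponent.exact h).symm.mem_of_adj_closed hS hs,
    fun hx => ConnectedComponent.sound (hreach x hx)⟩

end SimpleGraph

section IncidenceGraph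

variable {V : Set (ℕ × ℕ)} {H : Set (Set (ℕ × ℕ))}

@[simp]
theorem incGraph_adj_inl_inr {v : V} {h : H} :
    (incGraph V H).Adj (.inl v) (.inr h) ↔ (v : ℕ × ℕ) ∈ (h : Set (ℕ × ℕ)) := by
  simp only [incGraph]; aesop

@[simp]
theorem incGraph_adj_inr_inl {v : V} {h : H} :
    (incGraph V H).Adj (.inr h) (.inl v) ↔ (v : ℕ × ℕ) ∈ (h : Set (ℕ × ℕ)) := by
  simp only [incGraph]; aesop

@[simp]
theorem incGraph_not_adj_inl_inl {v w : V} : ¬(incGraph V H).Adj (.inl v) (.inl w) := by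
  simp [incGraph]

@[simp]
theorem incGraph_not_adj_inr_inr {h k : H} : ¬(incGraph V H).Adj (.inr h) (.inr k) := by
  simp [incGraph]

def incRank (f : ℕ × ℕ → ℕ) (g : Set (ℕ × ℕ) → ℕ) : V ⊕ H → ℕ :=
  Sum.elim (fun v => f v) (fun h => g h)

theorem isAcyclic_incGraph_of_rank (f : ℕ × ℕ → ℕ) (g : Set (ℕ × ℕ) → ℕ)
    (hne : ∀ h ∈ H, ∀ v ∈ h, f v ≠ g h)
    (hvert : ∀ v, ∀ h ∈ H, ∀ k ∈ H, v ∈ h → v ∈ k → g h < f v → g k < f v →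
      h = k)
    (hedge : ∀ h ∈ H, ∀ v ∈ h, ∀ w ∈ h, f v < g h → f w < g h → v = w) :
    (incGraph V H).IsAcyclic := by
  refine isAcyclic_of_rank (incRank f g) ?_ ?_
  · rintro (v | h) (w | k) hadj
    · exact absurd hadj incGraph_not_adj_inl_inl
    · exact hne _ k.2 _ (incGraph_adj_inl_inr.1 hadj)
    · exact (hne _ h.2 _ (incGraph_adj_inr_inl.1 hadj)).symm
    · exact absurd hadj incGraph_not_adj_inr_inr
  · rintro (v | h) (w | k) (u | l) hy hz hy' hz'
    case inl.inr.inr =>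
      rw [incGraph_adj_inl_inr] at hy hz
      exact congrArg _ (Subtype.ext (hvert _ _ k.2 _ l.2 hy hz hy' hz'))
    case inr.inl.inl =>
      rw [incGraph_adj_inr_inl] at hy hz
      exact congrArg _ (Subtype.ext (hedge _ h.2 _ hy _ hz hy' hz'))
    all_goals simp at hy hz

end IncidenceGraph

def explicitEdges (n : ℕ) : Set (Set (ℕ × ℕ)) :=
  {h | ∃ a b c : ℕ, a ≠ b ∧ b ≠ c ∧ a ≠ c ∧
    1 ≤ a ∧ a ≤ n ∧ 1 ≤ b ∧ b ≤ n ∧ 1 ≤ c ∧ c ≤ n ∧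
    max a b < c ∧ b % (c - 1) = (a + 1) % (c - 1) ∧ h = Tset a b c}

theorem mem_Tset_iff {v : ℕ × ℕ} {a b c : ℕ} :
    v ∈ Tset a b c ↔ v = (a, b) ∨ v = (b, c) ∨ v = (c, a) := Iff.rfl

theorem Tset_rotate (a b c : ℕ) : Tset a b c = Tset b c a := by
  ext v
  simp only [mem_Tset_iff]
  tauto

theorem sub_one_eq_mod_of_mod_eq_succ_mod {a b m : ℕ} (hb : 1 ≤ b) (hbm : b ≤ m)
    (h : b % m = (a + 1) % m) : b - 1 = a % m := by
  have hmod : b - 1 ≡ a [MOD m] := Nat.ModEq.add_right_cancel' 1 (by rwa [Nat.sub_add_cancel hb])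
  rwa [Nat.ModEq, Nat.mod_eq_of_lt (by omega)] at hmod

theorem mem_explicitEdges_iff {n : ℕ} {h : Set (ℕ × ℕ)} :
    h ∈ explicitEdges n ↔
      (∃ a c, 1 ≤ a ∧ a + 2 ≤ c ∧ c ≤ n ∧ h = Tset a (a + 1) c) ∨
      (∃ c, 3 ≤ c ∧ c ≤ n ∧ h = Tset (c - 1) 1 c) := by
  constructor
  · rintro ⟨a, b, c, hab, -, -, ha, -, hb, -, -, hcn, hmax, hmod, rfl⟩
    have hac : a < c := lt_of_le_of_lt (le_max_left a b) hmax
    have hbc : b < c := lt_of_le_of_lt (le_max_right a b) hmax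
    have hb' := sub_one_eq_mod_of_mod_eq_succ_mod hb (by omega) hmod
    rcases Nat.lt_or_ge a (c - 1) with hlt | hge
    · rw [Nat.mod_eq_of_lt hlt] at hb'
      exact .inl ⟨a, c, ha, by omega, hcn, by rw [show b = a + 1 by omega]⟩
    · rw [show a = c - 1 by omega, Nat.mod_self] at hb'
      exact .inr ⟨c, by omega, hcn, by rw [show a = c - 1 by omega, show b = 1 by omega]⟩
  · rintro (⟨a, c, ha, hac, hcn, rfl⟩ | ⟨c, hc, hcn, rfl⟩)
    · exact ⟨a, a + 1, c, by omega, by omega, by omega, ha, by omega, by omega, by omega,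
        by omega, hcn, by omega, rfl, rfl⟩
    · refine ⟨c - 1, 1, c, by omega, by omega, by omega, by omega, by omega, le_rfl, by omega,
        by omega, hcn, by omega, (Nat.add_mod_left _ _).symm, rfl⟩

def pairSum (p : ℕ × ℕ) : ℕ := p.1 + p.2

noncomputable def minSum (h : Set (ℕ × ℕ)) : ℕ := sInf (pairSum '' h)

theorem minSum_Tset {a b c : ℕ} (hb : a + b ≤ b + c) (hc : a + b ≤ c + a) :
    minSum (Tset a b c) = a + b := by
  refine IsLeast.csInf_eq ⟨⟨(a, b), .inl rfl, rfl⟩, ?_⟩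
  rintro _ ⟨v, hv, rfl⟩
  rcases mem_Tset_iff.1 hv with rfl | rfl | rfl <;> simp only [pairSum] <;> omega

section ExplicitEdges

variable {n : ℕ} {h : Set (ℕ × ℕ)}

theorem exists_eq_Tset_of_mem_explicitEdges (hh : h ∈ explicitEdges n) :
    ∃ a b c, h = Tset a b c ∧ (a, b) ∈ PairsSet n ∧ a + b < b + c ∧ a + b < c + a := by
  rcases mem_explicitEdges_iff.1 hh with ⟨a, c, ha, hac, hcn, rfl⟩ | ⟨c, hc, hcn, rfl⟩
  · exact ⟨a, a + 1, c, rfl, ⟨by omega, ha, by omega, by omega, by omega⟩, by omega,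
      by omega⟩
  · exact ⟨c - 1, 1, c, rfl, ⟨by omega, by omega, by omega, le_rfl, by omega⟩, by omega,
      by omega⟩

theorem exists_mem_pairsSet_pairSum_eq_minSum (hh : h ∈ explicitEdges n) :
    ∃ v ∈ h, v ∈ PairsSet n ∧ pairSum v = minSum h := by
  obtain ⟨a, b, c, rfl, hab, hb, hc⟩ := exists_eq_Tset_of_mem_explicitEdges hh
  exact ⟨(a, b), .inl rfl, hab, (minSum_Tset hb.le hc.le).symm⟩

theorem eq_of_pairSum_le_minSum (hh : h ∈ explicitEdges n) {v w : ℕ × ℕ} (hv : v ∈ h)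
    (hw : w ∈ h) (hv' : pairSum v ≤ minSum h) (hw' : pairSum w ≤ minSum h) : v = w := by
  obtain ⟨a, b, c, rfl, -, hb, hc⟩ := exists_eq_Tset_of_mem_explicitEdges hh
  rw [minSum_Tset hb.le hc.le] at hv' hw'
  rcases mem_Tset_iff.1 hv with rfl | rfl | rfl <;>
    rcases mem_Tset_iff.1 hw with rfl | rfl | rfl <;>
    simp only [pairSum] at hv' hw' <;> first | rfl | omega

/-- The unique hyperedge through `p` in which `p` is not the vertex of least `pairSum`. -/
def parentEdge (p : ℕ × ℕ) : Set (ℕ × ℕ) :=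
  if p.1 < p.2 then
    if p.1 = 1 then Tset (p.2 - 1) 1 p.2 else Tset (p.1 - 1) p.1 p.2
  else
    if p.2 + 1 = p.1 then Tset (p.1 - 1) 1 p.1 else Tset p.2 (p.2 + 1) p.1

theorem mem_parentEdge (p : ℕ × ℕ) : p ∈ parentEdge p := by
  obtain ⟨x, y⟩ := p
  dsimp only [parentEdge]
  split_ifs <;> simp only [mem_Tset_iff, Prod.mk.injEq, and_true, true_and, or_true, true_or] <;>
    omega

theorem minSum_parentEdge_lt {p : ℕ × ℕ} (hp : p ∈ PairsSet n) :
    minSum (parentEdge p) < pairSum p := by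
  obtain ⟨x, y⟩ := p
  obtain ⟨hxy, hx, -, hy, -⟩ := hp
  dsimp only [parentEdge, pairSum] at *
  split_ifs <;> rw [minSum_Tset] <;> omega

theorem parentEdge_mem_explicitEdges {p : ℕ × ℕ} (hp : p ∈ PairsSet n) (h₁ : p ≠ (1, 2))
    (h₂ : p ≠ (2, 1)) : parentEdge p ∈ explicitEdges n := by
  obtain ⟨x, y⟩ := p
  obtain ⟨hxy, hx, hxn, hy, hyn⟩ := hp
  simp only [ne_eq, Prod.mk.injEq] at h₁ h₂
  dsimp only [parentEdge]
  rw [mem_explicitEdges_iff]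
  split_ifs
  · exact .inr ⟨y, by omega, hyn, by simp_all⟩
  · exact .inl ⟨x - 1, y, by omega, by omega, hyn, by rw [Nat.sub_add_cancel hx]⟩
  · exact .inr ⟨x, by omega, hxn, rfl⟩
  · exact .inl ⟨y, x, hy, by omega, hxn, rfl⟩

theorem eq_parentEdge (hh : h ∈ explicitEdges n) {v : ℕ × ℕ} (hv : v ∈ h)
    (hlt : minSum h < pairSum v) : h = parentEdge v := by
  rcases mem_explicitEdges_iff.1 hh with ⟨a, c, ha, hac, hcn, rfl⟩ | ⟨c, hc, hcn, rfl⟩ <;>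
    rw [minSum_Tset (by omega) (by omega)] at hlt <;>
    rcases mem_Tset_iff.1 hv with rfl | rfl | rfl <;> unfold parentEdge <;>
    simp only [pairSum] at hlt <;> split_ifs <;> first | omega | simp

theorem eq_Tset_321_of_mem (hh : h ∈ explicitEdges n) {v : ℕ × ℕ} (hv : v ∈ h)
    (hv' : v ∈ Tset 3 2 1) : h = Tset 3 2 1 := by
  rcases mem_explicitEdges_iff.1 hh with ⟨a, c, ha, hac, -, rfl⟩ | ⟨c, hc, -, rfl⟩
  · exfalso
    rcases mem_Tset_iff.1 hv with rfl | rfl | rfl <;>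
      rcases mem_Tset_iff.1 hv' with hx | hx | hx <;> simp only [Prod.mk.injEq] at hx <;> omega
  · obtain rfl : c = 3 := by
      rcases mem_Tset_iff.1 hv with rfl | rfl | rfl <;>
        rcases mem_Tset_iff.1 hv' with hx | hx | hx <;> simp only [Prod.mk.injEq] at hx <;> omega
    exact (Tset_rotate 3 2 1).symm

theorem Tset_321_mem_explicitEdges (hn : 3 ≤ n) : Tset 3 2 1 ∈ explicitEdges n :=
  mem_explicitEdges_iff.2 (.inr ⟨3, le_rfl, hn, Tset_rotate 3 2 1⟩)

end ExplicitEdges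

abbrev explicitGraph (n : ℕ) : SimpleGraph (PairsSet n ⊕ explicitEdges n) :=
  incGraph (PairsSet n) (explicitEdges n)

def vertexRank (v : ℕ × ℕ) : ℕ := 2 * pairSum v

noncomputable def edgeRank (h : Set (ℕ × ℕ)) : ℕ := 2 * minSum h + 1

theorem isAcyclic_explicitGraph (n : ℕ) : (explicitGraph n).IsAcyclic :=
  isAcyclic_incGraph_of_rank vertexRank edgeRank
    (fun _ _ _ _ => by unfold vertexRank edgeRank; omega)
    (fun _ _ hh _ hk hv hv' hlt hlt' => by
      unfold vertexRank edgeRank at hlt hlt'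
      exact (eq_parentEdge hh hv (by omega)).trans (eq_parentEdge hk hv' (by omega)).symm)
    (fun _ hh _ hv _ hw hlt hlt' => by
      unfold vertexRank edgeRank at hlt hlt'
      exact eq_of_pairSum_le_minSum hh hv hw (by omega) (by omega))

def smallPart (n : ℕ) : Set (PairsSet n ⊕ explicitEdges n) :=
  {x | x.elim (fun v : PairsSet n => (v : ℕ × ℕ) ∈ Tset 3 2 1)
    (fun h : explicitEdges n => (h : Set (ℕ × ℕ)) = Tset 3 2 1)}

theorem inl_mem_smallPart {n : ℕ} {v : PairsSet n} :
    .inl v ∈ smallPart n ↔ (v : ℕ × ℕ) ∈ Tset 3 2 1 := Iff.rfl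

theorem inr_mem_smallPart {n : ℕ} {h : explicitEdges n} :
    .inr h ∈ smallPart n ↔ (h : Set (ℕ × ℕ)) = Tset 3 2 1 := Iff.rfl

theorem smallPart_adj_closed (n : ℕ) :
    ∀ x y, (explicitGraph n).Adj x y → x ∈ smallPart n → y ∈ smallPart n := by
  rintro (v | h) (w | k) hadj hx
  · exact absurd hadj incGraph_not_adj_inl_inl
  · exact eq_Tset_321_of_mem k.2 (incGraph_adj_inl_inr.1 hadj) hx
  · exact inl_mem_smallPart.2 (inr_mem_smallPart.1 hx ▸ incGraph_adj_inr_inl.1 hadj)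
  · exact absurd hadj incGraph_not_adj_inr_inr

theorem reachable_of_mem_smallPart {n : ℕ} (hn : 3 ≤ n) :
    ∀ x ∈ smallPart n,
      (explicitGraph n).Reachable x (.inr ⟨_, Tset_321_mem_explicitEdges hn⟩) := by
  rintro (v | h) hx
  · exact (incGraph_adj_inl_inr.2 hx).reachable
  · obtain rfl : h = ⟨_, Tset_321_mem_explicitEdges hn⟩ := Subtype.ext hx
    rfl

theorem one_two_mem_pairsSet {n : ℕ} (hn : 2 ≤ n) : (1, 2) ∈ PairsSet n :=
  ⟨by decide, le_rfl, by omega, by decide, hn⟩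

theorem reachable_of_not_mem_smallPart {n : ℕ} (hn : 2 ≤ n) :
    ∀ x ∉ smallPart n,
      (explicitGraph n).Reachable x (.inl ⟨(1, 2), one_two_mem_pairsSet hn⟩) := by
  refine reachable_of_exists_adj_rank_lt (incRank vertexRank edgeRank) ?_
  rintro (v | h) hx hroot
  · have h₁ : (v : ℕ × ℕ) ≠ (1, 2) := fun h => hroot (congrArg _ (Subtype.ext h))
    have h₂ : (v : ℕ × ℕ) ≠ (2, 1) := fun h =>
      hx (inl_mem_smallPart.2 (h ▸ .inr (.inl rfl)))
    refine ⟨.inr ⟨_, parentEdge_mem_explicitEdges v.2 h₁ h₂⟩,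
      incGraph_adj_inl_inr.2 (mem_parentEdge _),
      fun h => hx (inl_mem_smallPart.2 (inr_mem_smallPart.1 h ▸ mem_parentEdge _)), ?_⟩
    have := minSum_parentEdge_lt v.2
    simp only [incRank, Sum.elim_inl, Sum.elim_inr, vertexRank, edgeRank]
    omega
  · obtain ⟨w, hw, hwV, hsum⟩ := exists_mem_pairsSet_pairSum_eq_minSum h.2
    refine ⟨.inl ⟨w, hwV⟩, incGraph_adj_inr_inl.2 hw,
      fun hw' => hx (eq_Tset_321_of_mem h.2 hw hw'), ?_⟩
    simp only [incRank, Sum.elim_inl, Sum.elim_inr, vertexRank, edgeRank]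
    omega

/-- The explicit hypergraph whose hyperedges are all triangles `T(a,b,c)` with
`max{a,b} < c` and `b ≡ a + 1 (mod c-1)` is acyclic with exactly two components:
one consisting of the three vertices of `T(3,2,1)`, and one containing all other
vertices of `[n]^(2)` (for `n ≥ 3`). -/
theorem explicit_hypergraph (n : ℕ) (hn : 3 ≤ n) :
    (incGraph (PairsSet n)
      {h | ∃ a b c : ℕ, a ≠ b ∧ b ≠ c ∧ a ≠ c ∧
        1 ≤ a ∧ a ≤ n ∧ 1 ≤ b ∧ b ≤ n ∧ 1 ≤ c ∧ c ≤ n ∧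
        max a b < c ∧ b % (c - 1) = (a + 1) % (c - 1) ∧ h = Tset a b c}).IsAcyclic ∧
    TwoComponents321 (PairsSet n)
      {h | ∃ a b c : ℕ, a ≠ b ∧ b ≠ c ∧ a ≠ c ∧
        1 ≤ a ∧ a ≤ n ∧ 1 ≤ b ∧ b ≤ n ∧ 1 ≤ c ∧ c ≤ n ∧
        max a b < c ∧ b % (c - 1) = (a + 1) % (c - 1) ∧ h = Tset a b c} := by
  refine ⟨isAcyclic_explicitGraph n, ?_⟩
  have hsmall := (explicitGraph n).connectedComponentMk_eq_iff_of_adj_closed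
    (smallPart_adj_closed n) rfl (reachable_of_mem_smallPart hn)
  have hlarge := reachable_of_not_mem_smallPart (by omega : 2 ≤ n)
  refine ⟨_, (explicitGraph n).connectedComponentMk
    (.inl ⟨(1, 2), one_two_mem_pairsSet (by omega)⟩), fun hne => ?_, fun x => ?_,
    fun v => hsmall (.inl v)⟩
  · have hroot := inl_mem_smallPart.1 ((hsmall _).1 hne.symm)
    simp [mem_Tset_iff] at hroot
  · by_cases hx : x ∈ smallPart n
    · exact .inl ((hsmall x).2 hx)
    · exact .inr (ConnectedComponent.sound (hlarge x hx))
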